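/- arXiv:math/0410271 — 4 statements merged into one kernel-verified Lean document; each statement's English description precedes it below -/
import Mathlib

section
/- Let Ω be a set, Y : Ω → ℝ, and let (Y^{(t)})_{t ∈ [0,∞)} be a family of functions Ω → ℝ such that for every t: (consistency) Y^{(t)}(ω) = Y(ω) whenever Y(ω) < t or Y^{(t)}(ω) < t; and (no instantaneous effect at death) Y^{(t)}(ω) = Y(ω) whenever Y(ω) = t or Y^{(t)}(ω) = t. Then for every t ≥ 0 and every h ≥ 0, Y^{(t+h)}(ω) = Y(ω) for every ω in the set {ω : Y(ω) ≤ t} ∪ ⋃_{h′ ≥ 0} {ω : Y^{(t+h′)}(ω) ≤ t}. -/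
/-- Treatment in the future does not cause or prevent death at present or before:
under consistency (`Y^{(t)} = Y` on `{Y < t} ∪ {Y^{(t)} < t}`) and no instantaneous
effect at death (`Y^{(t)} = Y` on `{Y = t} ∪ {Y^{(t)} = t}`), for all `t ≥ 0` and `h ≥ 0`,
`Y^{(t+h)} = Y` on the set `{Y ≤ t} ∪ ⋃_{h' ≥ 0} {Y^{(t+h')} ≤ t}`. -/
theorem stmt3 {Ω : Type*} (Y : Ω → ℝ) (Yc : ℝ → Ω → ℝ)
    (hcons : ∀ t : ℝ, 0 ≤ t → ∀ ω : Ω, (Y ω < t ∨ Yc t ω < t) → Yc t ω = Y ω)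
    (hinst : ∀ t : ℝ, 0 ≤ t → ∀ ω : Ω, (Y ω = t ∨ Yc t ω = t) → Yc t ω = Y ω)
    (t : ℝ) (ht : 0 ≤ t) (h : ℝ) (hh : 0 ≤ h) :
    ∀ ω ∈ {ω : Ω | Y ω ≤ t} ∪ ⋃ h' ∈ Set.Ici (0 : ℝ), {ω : Ω | Yc (t + h') ω ≤ t},
      Yc (t + h) ω = Y ω := by
  intro ω hω
  have key : ∀ s : ℝ, 0 ≤ s → ∀ ω : Ω, Y ω ≤ s ∨ Yc s ω ≤ s → Yc s ω = Y ω := by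
    intro s hs ω hle
    rcases hle with hle | hle
    · rcases lt_or_eq_of_le hle with h' | h'
      · exact hcons s hs ω (Or.inl h')
      · exact hinst s hs ω (Or.inl h')
    · rcases lt_or_eq_of_le hle with h' | h'
      · exact hcons s hs ω (Or.inr h')
      · exact hinst s hs ω (Or.inr h')
  have hYt : Y ω ≤ t := by
    rcases hω with hω | hω
    · exact hω
    · simp only [Set.mem_iUnion, Set.mem_setOf_eq] at hω
      obtain ⟨h', hh', hle⟩ := hω
      have := key (t + h') (by linarith [Set.mem_Ici.mp hh']) ω
        (Or.inr (le_trans hle (by linarith [Set.mem_Ici.mp hh'])))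
      linarith
  exact key (t + h) (by linarith) ω (Or.inl (by linarith))
end

section
/- Let Ω be a set, Y : Ω → ℝ, and let (Y^{(t)})_{t ∈ [0,∞)} be a family of functions Ω → ℝ such that for every t: (consistency) Y^{(t)}(ω) = Y(ω) whenever Y(ω) < t or Y^{(t)}(ω) < t; and (no instantaneous effect at death) Y^{(t)}(ω) = Y(ω) whenever Y(ω) = t or Y^{(t)}(ω) = t. Then for all t ≥ 0, h ≥ 0 and all y ∈ ℝ with y ≤ t + h, the level sets agree: {ω : Y^{(t+h)}(ω) ≤ y} = {ω : Y(ω) ≤ y}. -/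
/-- Under consistency (`Y^{(t)} = Y` on `{Y < t} ∪ {Y^{(t)} < t}`) and no instantaneous
effect at death (`Y^{(t)} = Y` on `{Y = t} ∪ {Y^{(t)} = t}`), for all `t ≥ 0`, `h ≥ 0` and
`y ≤ t + h`, the level sets agree: `{ω : Y^{(t+h)}(ω) ≤ y} = {ω : Y(ω) ≤ y}`. -/
theorem stmt4 {Ω : Type*} (Y : Ω → ℝ) (Yc : ℝ → Ω → ℝ)
    (hcons : ∀ t : ℝ, 0 ≤ t → ∀ ω : Ω, (Y ω < t ∨ Yc t ω < t) → Yc t ω = Y ω)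
    (hinst : ∀ t : ℝ, 0 ≤ t → ∀ ω : Ω, (Y ω = t ∨ Yc t ω = t) → Yc t ω = Y ω)
    (t : ℝ) (ht : 0 ≤ t) (h : ℝ) (hh : 0 ≤ h) (y : ℝ) (hy : y ≤ t + h) :
    {ω : Ω | Yc (t + h) ω ≤ y} = {ω : Ω | Y ω ≤ y} := by
  have hth : 0 ≤ t + h := by linarith
  ext ω
  simp only [Set.mem_setOf_eq]
  constructor
  · intro hle
    rcases lt_or_eq_of_le (le_trans hle hy) with hc | hc
    · rw [← hcons _ hth ω (Or.inr hc)]; exact hle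
    · rw [← hinst _ hth ω (Or.inr hc)]; exact hle
  · intro hle
    rcases lt_or_eq_of_le (le_trans hle hy) with hc | hc
    · rw [hcons _ hth ω (Or.inl hc)]; exact hle
    · rw [hinst _ hth ω (Or.inl hc)]; exact hle
end

section
/- Let X₁, X₂, … be independent and identically distributed random variables on a probability space (Ω, 𝔽, P) with values in a measurable space 𝒳. Let Θ ⊂ ℝ^d contain an open neighborhood Θ₀ of a point θ₀, and let {f_θ : θ ∈ Θ} be a collection of measurable functions from 𝒳 to ℝ^k such that θ ↦ f_θ(x) is continuous on Θ₀ for every x ∈ 𝒳, and such that there exists a measurable function F : 𝒳 → ℝ with ‖f_θ(x)‖ ≤ F(x) for all θ ∈ Θ₀ and x ∈ 𝒳 and E[F(X₁)] < ∞. Let θ̂ₙ : Ω → Θ be measurable and suppose θ̂ₙ converges in probability to θ₀. Then the plug-in empirical average (1/n) Σ_{i=1}^{n} f_{θ̂ₙ}(X_i) converges in probability to E[f_{θ₀}(X₁)]. -/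
open MeasureTheory ProbabilityTheory Filter Topology Metric Finset TopologicalSpace

/-! On the event that `θ̂ₙ` lies in a small ball `B` around `θ₀`, the plug-in average differs from
`Pₙ f_{θ₀}` by at most `Pₙ ω_B`, where `ω_B x = sup_{θ ∈ B} ‖f_θ x - f_{θ₀} x‖`. Both
`Pₙ f_{θ₀}` and `Pₙ ω_B` obey the strong law of large numbers, and `E ω_B(X₁) → 0` as `B`
shrinks to `θ₀`, by continuity in `θ` and dominated convergence with the bound `2F`. -/

section TendstoInMeasure

variable {Ω ι : Type*} [MeasurableSpace Ω] {P : Measure Ω} {l : Filter ι}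

lemma MeasureTheory.TendstoInMeasure.of_tendsto_measure_dist {E : Type*} [PseudoMetricSpace E]
    {Z S : ι → Ω → E} {g : Ω → E} (hS : TendstoInMeasure P S l g)
    (hZS : ∀ ε > 0, Tendsto (fun n => P {ω | ε ≤ dist (Z n ω) (S n ω)}) l (𝓝 0)) :
    TendstoInMeasure P Z l g := by
  rw [tendstoInMeasure_iff_dist] at hS ⊢
  intro ε hε
  have hsub : ∀ n, {ω | ε ≤ dist (Z n ω) (g ω)} ⊆
      {ω | ε / 2 ≤ dist (Z n ω) (S n ω)} ∪ {ω | ε / 2 ≤ dist (S n ω) (g ω)} := by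
    intro n ω hω
    by_contra h
    simp only [Set.mem_union, Set.mem_ofPred_eq, not_or, not_le] at h hω
    linarith [dist_triangle (Z n ω) (S n ω) (g ω)]
  refine tendsto_of_tendsto_of_tendsto_of_le_of_le tendsto_const_nhds
    (by simpa only [add_zero] using (hZS _ (half_pos hε)).add (hS _ (half_pos hε)))
    (fun n => zero_le)
    fun n => (measure_mono (hsub n)).trans (measure_union_le _ _)

lemma MeasureTheory.TendstoInMeasure.tendsto_measure_le_of_lt {G : ι → Ω → ℝ} {c ε : ℝ}
    (hG : TendstoInMeasure P G l fun _ => c) (hc : c < ε) :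
    Tendsto (fun n => P {ω | ε ≤ G n ω}) l (𝓝 0) := by
  refine tendsto_of_tendsto_of_tendsto_of_le_of_le tendsto_const_nhds
    (tendstoInMeasure_iff_dist.1 hG (ε - c) (sub_pos.2 hc)) (fun n => zero_le)
    fun n => measure_mono fun ω hω => ?_
  simp only [Set.mem_ofPred_eq, Real.dist_eq] at hω ⊢
  exact (sub_le_sub_right hω c).trans (le_abs_self _)

end TendstoInMeasure

section Oscillation

variable {𝒳 E V : Type*} [NormedAddCommGroup V]

/-- The supremum runs over a countable dense part of `W` only, which keeps it measurable in `x`;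
by continuity it still dominates `‖f θ x - f θ₀ x‖` on all of `W` when `W` is open. -/
noncomputable def oscillationOn (D W : Set E) (f : E → 𝒳 → V) (θ₀ : E) (x : 𝒳) : ℝ :=
  ⨆ θ : ↥(W ∩ D), ‖f θ x - f θ₀ x‖

variable {D W U : Set E} {f : E → 𝒳 → V} {θ₀ : E} {x : 𝒳}

lemma oscillationOn_nonneg : 0 ≤ oscillationOn D W f θ₀ x :=
  Real.iSup_nonneg fun _ => norm_nonneg _

lemma oscillationOn_le {C : ℝ} (hC : 0 ≤ C) (h : ∀ θ ∈ W, ‖f θ x - f θ₀ x‖ ≤ C) :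
    oscillationOn D W f θ₀ x ≤ C :=
  Real.iSup_le (fun θ => h θ θ.2.1) hC

lemma norm_sub_le_two_mul_of_dominated {F : 𝒳 → ℝ} (hdom : ∀ θ ∈ U, ‖f θ x‖ ≤ F x)
    (hθ₀ : θ₀ ∈ U) {θ : E} (hθ : θ ∈ U) : ‖f θ x - f θ₀ x‖ ≤ 2 * F x :=
  two_mul (F x) ▸ (norm_sub_le _ _).trans (add_le_add (hdom θ hθ) (hdom θ₀ hθ₀))

lemma norm_oscillationOn_le {F : 𝒳 → ℝ} (hdom : ∀ θ ∈ U, ‖f θ x‖ ≤ F x) (hθ₀ : θ₀ ∈ U)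
    (hWU : W ⊆ U) : ‖oscillationOn D W f θ₀ x‖ ≤ 2 * F x := by
  rw [Real.norm_of_nonneg oscillationOn_nonneg]
  exact oscillationOn_le (mul_nonneg zero_le_two ((norm_nonneg _).trans (hdom θ₀ hθ₀)))
    fun θ hθ => norm_sub_le_two_mul_of_dominated hdom hθ₀ (hWU hθ)

lemma measurable_oscillationOn [MeasurableSpace 𝒳] [MeasurableSpace V] [BorelSpace V]
    [SecondCountableTopology V] (hD : D.Countable) (hmeas : ∀ θ ∈ W, Measurable (f θ))
    (hmeas₀ : Measurable (f θ₀)) : Measurable (oscillationOn D W f θ₀) := by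
  have : Countable ↥(W ∩ D) := (hD.mono Set.inter_subset_right).to_subtype
  exact Measurable.iSup fun θ => ((hmeas θ θ.2.1).sub hmeas₀).norm

lemma norm_sub_le_oscillationOn [TopologicalSpace E] (hD : Dense D) (hW : IsOpen W)
    (hcont : ContinuousOn (fun θ => f θ x) W) {C : ℝ} (hC : ∀ θ ∈ W, ‖f θ x - f θ₀ x‖ ≤ C)
    {θ : E} (hθ : θ ∈ W) : ‖f θ x - f θ₀ x‖ ≤ oscillationOn D W f θ₀ x := by
  have hbdd : BddAbove (Set.range fun θ : ↥(W ∩ D) => ‖f θ x - f θ₀ x‖) :=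
    ⟨C, by rintro _ ⟨θ, rfl⟩; exact hC θ θ.2.1⟩
  exact ContinuousWithinAt.closure_le (hD.open_subset_closure_inter hW hθ)
    (((hcont θ hθ).mono Set.inter_subset_left).sub continuousWithinAt_const).norm
    continuousWithinAt_const fun θ' hθ' => le_ciSup hbdd ⟨θ', hθ'⟩

lemma tendsto_oscillationOn_ball [PseudoMetricSpace E]
    (hcont : ContinuousAt (fun θ => f θ x) θ₀) :
    Tendsto (fun r => oscillationOn D (ball θ₀ r) f θ₀ x) (𝓝[>] 0) (𝓝 0) := by
  rw [Metric.tendsto_nhds]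
  intro ε hε
  obtain ⟨δ, hδ, hfδ⟩ := Metric.continuousAt_iff.1 hcont (ε / 2) (half_pos hε)
  filter_upwards [Ioo_mem_nhdsGT hδ] with r hr
  have hle : oscillationOn D (ball θ₀ r) f θ₀ x ≤ ε / 2 :=
    oscillationOn_le (half_pos hε).le fun θ hθ => by
      rw [← dist_eq_norm]; exact (hfδ ((mem_ball.1 hθ).trans hr.2)).le
  rw [Real.dist_eq, sub_zero, abs_of_nonneg oscillationOn_nonneg]
  linarith

lemma eventually_ball_subset_nhdsGT [PseudoMetricSpace E] (hU : U ∈ 𝓝 θ₀) :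
    ∀ᶠ r in 𝓝[>] (0 : ℝ), ball θ₀ r ⊆ U := by
  obtain ⟨r₀, hr₀, hsub⟩ := Metric.mem_nhds_iff.1 hU
  filter_upwards [Ioo_mem_nhdsGT hr₀] with r hr
  exact (ball_subset_ball hr.2.le).trans hsub

end Oscillation

section EmpiricalMean

variable {Ω 𝒳 V : Type*} [NormedAddCommGroup V] [NormedSpace ℝ V]

noncomputable def empiricalMean (X : ℕ → Ω → 𝒳) (n : ℕ) (ω : Ω) (g : 𝒳 → V) : V :=
  (n : ℝ)⁻¹ • ∑ i ∈ range n, g (X i ω)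

lemma norm_empiricalMean_sub_le (X : ℕ → Ω → 𝒳) (n : ℕ) (ω : Ω) {g h : 𝒳 → V} {c : 𝒳 → ℝ}
    (hgh : ∀ x, ‖g x - h x‖ ≤ c x) :
    ‖empiricalMean X n ω g - empiricalMean X n ω h‖ ≤ empiricalMean X n ω c := by
  simp only [empiricalMean, ← smul_sub, ← sum_sub_distrib, norm_smul, norm_inv,
    RCLike.norm_natCast, smul_eq_mul]
  gcongr
  exact (norm_sum_le _ _).trans (sum_le_sum fun i _ => hgh _)

lemma tendstoInMeasure_empiricalMean [MeasurableSpace Ω] [MeasurableSpace 𝒳] {P : Measure Ω}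
    [IsProbabilityMeasure P] [CompleteSpace V] [MeasurableSpace V] [BorelSpace V] {X : ℕ → Ω → 𝒳}
    (hindep : Pairwise fun i j => IndepFun (X i) (X j) P)
    (hident : ∀ i, IdentDistrib (X i) (X 0) P P) {g : 𝒳 → V} (hg : Measurable g)
    (hint : Integrable (fun ω => g (X 0 ω)) P) :
    TendstoInMeasure P (fun n ω => empiricalMean X n ω g) atTop
      (fun _ => ∫ ω, g (X 0 ω) ∂P) := by
  have hint_i : ∀ i, Integrable (fun ω => g (X i ω)) P := fun i =>
    ((hident i).comp hg).integrable_iff.2 hint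
  refine tendstoInMeasure_of_tendsto_ae (fun n => ?_) ?_
  · exact ((integrable_finsetSum _ fun i _ => hint_i i).smul _).aestronglyMeasurable
  · exact strong_law_ae (fun i ω => g (X i ω)) hint (fun i j hij => (hindep hij).comp hg hg)
      fun i => (hident i).comp hg

end EmpiricalMean

section PlugIn

variable {Ω 𝒳 E V : Type*} [MeasurableSpace Ω] [MeasurableSpace 𝒳] {P : Measure Ω}
  [PseudoMetricSpace E] [NormedAddCommGroup V] [MeasurableSpace V] [BorelSpace V]
  [SecondCountableTopology V]
  {U D : Set E} {θ₀ : E} {f : E → 𝒳 → V} {F : 𝒳 → ℝ}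

lemma tendsto_integral_oscillationOn_ball {Y : Ω → 𝒳} (hY : Measurable Y) (hU : U ∈ 𝓝 θ₀)
    (hD : D.Countable) (hmeas : ∀ θ ∈ U, Measurable (f θ))
    (hcont : ∀ x, ContinuousAt (fun θ => f θ x) θ₀) (hdom : ∀ θ ∈ U, ∀ x, ‖f θ x‖ ≤ F x)
    (hF : Integrable (fun ω => F (Y ω)) P) :
    Tendsto (fun r => ∫ ω, oscillationOn D (ball θ₀ r) f θ₀ (Y ω) ∂P) (𝓝[>] 0) (𝓝 0) := by
  have hθ₀ : θ₀ ∈ U := mem_of_mem_nhds hU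
  have hosc_meas : ∀ᶠ r in 𝓝[>] 0,
      AEStronglyMeasurable (fun ω => oscillationOn D (ball θ₀ r) f θ₀ (Y ω)) P := by
    filter_upwards [eventually_ball_subset_nhdsGT hU] with r hr
    exact ((measurable_oscillationOn hD (fun θ hθ => hmeas θ (hr hθ)) (hmeas θ₀ hθ₀)).comp
      hY).aestronglyMeasurable
  have hosc_le : ∀ᶠ r in 𝓝[>] 0,
      ∀ᵐ ω ∂P, ‖oscillationOn D (ball θ₀ r) f θ₀ (Y ω)‖ ≤ 2 * F (Y ω) := by
    filter_upwards [eventually_ball_subset_nhdsGT hU] with r hr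
    exact ae_of_all _ fun ω => norm_oscillationOn_le (fun θ hθ => hdom θ hθ _) hθ₀ hr
  simpa only [integral_zero] using tendsto_integral_filter_of_dominated_convergence
    (f := fun _ => (0 : ℝ)) _ hosc_meas hosc_le (hF.const_mul 2)
    (ae_of_all _ fun ω => tendsto_oscillationOn_ball (hcont (Y ω)))

variable [NormedSpace ℝ V] [IsProbabilityMeasure P] [SeparableSpace E]

theorem tendsto_measure_dist_empiricalMean_plugIn {X : ℕ → Ω → 𝒳} (hX : ∀ i, Measurable (X i))
    (hindep : Pairwise fun i j => IndepFun (X i) (X j) P)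
    (hident : ∀ i, IdentDistrib (X i) (X 0) P P) (hUo : IsOpen U) (hθ₀ : θ₀ ∈ U)
    (hmeas : ∀ θ ∈ U, Measurable (f θ)) (hcont : ∀ x, ContinuousOn (fun θ => f θ x) U)
    (hdom : ∀ θ ∈ U, ∀ x, ‖f θ x‖ ≤ F x) (hF : Integrable (fun ω => F (X 0 ω)) P)
    {θhat : ℕ → Ω → E} (hθhat : TendstoInMeasure P θhat atTop fun _ => θ₀) {ε : ℝ}
    (hε : 0 < ε) :
    Tendsto (fun n => P {ω | ε ≤ dist (empiricalMean X n ω (f (θhat n ω)))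
      (empiricalMean X n ω (f θ₀))}) atTop (𝓝 0) := by
  obtain ⟨D, hDc, hDd⟩ := exists_countable_dense E
  have hU : U ∈ 𝓝 θ₀ := hUo.mem_nhds hθ₀
  have hcont₀ : ∀ x, ContinuousAt (fun θ => f θ x) θ₀ := fun x => (hcont x).continuousAt hU
  obtain ⟨r, hr_int, hrU, hr⟩ :=
    (((tendsto_order.1 (tendsto_integral_oscillationOn_ball (hX 0) hU hDc hmeas hcont₀ hdom
      hF)).2 ε hε).and ((eventually_ball_subset_nhdsGT hU).and self_mem_nhdsWithin)).exists
  have hosc_meas : Measurable (oscillationOn D (ball θ₀ r) f θ₀) :=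
    measurable_oscillationOn hDc (fun θ hθ => hmeas θ (hrU hθ)) (hmeas θ₀ hθ₀)
  have hosc_int : Integrable (fun ω => oscillationOn D (ball θ₀ r) f θ₀ (X 0 ω)) P :=
    (hF.const_mul 2).mono' (hosc_meas.comp (hX 0)).aestronglyMeasurable
      (ae_of_all _ fun ω => norm_oscillationOn_le (fun θ hθ => hdom θ hθ _) hθ₀ hrU)
  have hfar := tendstoInMeasure_iff_dist.1 hθhat r hr
  have hmean := (tendstoInMeasure_empiricalMean hindep hident hosc_meas hosc_int
    ).tendsto_measure_le_of_lt hr_int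
  refine tendsto_of_tendsto_of_tendsto_of_le_of_le tendsto_const_nhds
    (by simpa only [add_zero] using hfar.add hmean) (fun n => zero_le)
    fun n => (measure_mono fun ω hω => ?_).trans (measure_union_le _ _)
  by_contra h
  simp only [Set.mem_union, Set.mem_ofPred_eq, not_or, not_le] at h hω
  have hclose := norm_empiricalMean_sub_le X n ω fun x =>
    norm_sub_le_oscillationOn hDd isOpen_ball ((hcont x).mono hrU)
      (fun θ hθ => norm_sub_le_two_mul_of_dominated (fun θ hθ => hdom θ hθ x) hθ₀ (hrU hθ)) h.1
  rw [← dist_eq_norm] at hclose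
  linarith [h.2]

end PlugIn

theorem stmt5_general {Ω 𝒳 : Type*} [MeasurableSpace Ω] [m𝒳 : MeasurableSpace 𝒳]
    (P : Measure Ω) [IsProbabilityMeasure P]
    (X : ℕ → Ω → 𝒳) (hX_meas : ∀ i, Measurable (X i))
    (hX_indep : iIndepFun X P)
    (hX_ident : ∀ i, Measure.map (X i) P = Measure.map (X 0) P)
    (d k : ℕ) (Θ Θ₀ : Set (EuclideanSpace ℝ (Fin d))) (θ₀ : EuclideanSpace ℝ (Fin d))
    (hΘ₀open : IsOpen Θ₀) (hθ₀ : θ₀ ∈ Θ₀) (hΘ₀Θ : Θ₀ ⊆ Θ)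
    (f : EuclideanSpace ℝ (Fin d) → 𝒳 → EuclideanSpace ℝ (Fin k))
    (hf_meas : ∀ θ ∈ Θ, Measurable (f θ))
    (hf_cont : ∀ x : 𝒳, ContinuousOn (fun θ => f θ x) Θ₀)
    (F : 𝒳 → ℝ)
    (hF_dom : ∀ θ ∈ Θ₀, ∀ x : 𝒳, ‖f θ x‖ ≤ F x)
    (hF_int : Integrable (fun ω => F (X 0 ω)) P)
    (θhat : ℕ → Ω → EuclideanSpace ℝ (Fin d))
    (hθhat_tendsto : TendstoInMeasure P θhat Filter.atTop (fun _ => θ₀)) :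
    TendstoInMeasure P
      (fun (n : ℕ) (ω : Ω) => (n : ℝ)⁻¹ • ∑ i ∈ Finset.range n, f (θhat n ω) (X i ω))
      Filter.atTop (fun _ => ∫ ω, f θ₀ (X 0 ω) ∂P) := by
  have hident : ∀ i, IdentDistrib (X i) (X 0) P P := fun i =>
    ⟨(hX_meas i).aemeasurable, (hX_meas 0).aemeasurable, hX_ident i⟩
  have hindep : Pairwise fun i j => IndepFun (X i) (X j) P := fun i j hij =>
    hX_indep.indepFun hij
  have hmeas : ∀ θ ∈ Θ₀, Measurable (f θ) := fun θ hθ => hf_meas θ (hΘ₀Θ hθ)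
  have hint : Integrable (fun ω => f θ₀ (X 0 ω)) P :=
    hF_int.mono' ((hmeas θ₀ hθ₀).comp (hX_meas 0)).aestronglyMeasurable
      (ae_of_all _ fun ω => hF_dom θ₀ hθ₀ _)
  exact (tendstoInMeasure_empiricalMean hindep hident (hmeas θ₀ hθ₀) hint).of_tendsto_measure_dist
    fun ε hε => tendsto_measure_dist_empiricalMean_plugIn hX_meas hindep hident hΘ₀open hθ₀
      hmeas hf_cont hF_dom hF_int hθhat_tendsto hε

/-- If `X₁, X₂, …` are i.i.d. with values in a measurable space `𝒳`, `{f_θ : θ ∈ Θ}` is a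
collection of measurable functions `𝒳 → ℝᵏ`, continuous in `θ` on an open neighborhood `Θ₀`
of `θ₀` and dominated on `Θ₀` by an integrable function `F`, and `θ̂ₙ → θ₀` in probability,
then the plug-in empirical average `(1/n) Σ_{i=1}^n f_{θ̂ₙ}(X_i)` converges in probability
to `E[f_{θ₀}(X₁)]`. -/
theorem stmt5 {Ω 𝒳 : Type*} [MeasurableSpace Ω] [m𝒳 : MeasurableSpace 𝒳]
    (P : Measure Ω) [IsProbabilityMeasure P]
    (X : ℕ → Ω → 𝒳) (hX_meas : ∀ i, Measurable (X i))
    (hX_indep : iIndepFun X P)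
    (hX_ident : ∀ i, Measure.map (X i) P = Measure.map (X 0) P)
    (d k : ℕ) (Θ Θ₀ : Set (EuclideanSpace ℝ (Fin d))) (θ₀ : EuclideanSpace ℝ (Fin d))
    (hΘ₀open : IsOpen Θ₀) (hθ₀ : θ₀ ∈ Θ₀) (hΘ₀Θ : Θ₀ ⊆ Θ)
    (f : EuclideanSpace ℝ (Fin d) → 𝒳 → EuclideanSpace ℝ (Fin k))
    (hf_meas : ∀ θ ∈ Θ, Measurable (f θ))
    (hf_cont : ∀ x : 𝒳, ContinuousOn (fun θ => f θ x) Θ₀)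
    (F : 𝒳 → ℝ) (hF_meas : Measurable F)
    (hF_dom : ∀ θ ∈ Θ₀, ∀ x : 𝒳, ‖f θ x‖ ≤ F x)
    (hF_int : Integrable (fun ω => F (X 0 ω)) P)
    (θhat : ℕ → Ω → EuclideanSpace ℝ (Fin d))
    (hθhat_meas : ∀ n, Measurable (θhat n))
    (hθhat_mem : ∀ n ω, θhat n ω ∈ Θ)
    (hθhat_tendsto : TendstoInMeasure P θhat Filter.atTop (fun _ => θ₀)) :
    TendstoInMeasure P
      (fun (n : ℕ) (ω : Ω) => (n : ℝ)⁻¹ • ∑ i ∈ Finset.range n, f (θhat n ω) (X i ω))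
      Filter.atTop (fun _ => ∫ ω, f θ₀ (X 0 ω) ∂P) :=
  stmt5_general (m𝒳 := m𝒳) P X hX_meas hX_indep hX_ident d k Θ Θ₀ θ₀ hΘ₀open hθ₀ hΘ₀Θ f hf_meas
    hf_cont F hF_dom hF_int θhat hθhat_tendsto
end

section
/- Let τ > 0. Let f : [0,τ] → ℝ be cadlag, with f⁻(t) = lim_{s↑t} f(s) for t ∈ (0,τ] and f⁻(0) = f(0). Let λ : [0,τ] → ℝ be bounded and continuous from the left at every point of (0,τ], and let h : [0,τ] × ℝ → ℝ be bounded and satisfy: for every t₀ ∈ (0,τ] and y₀ ∈ ℝ, h(t, y) → h(t₀, y₀) whenever t ↑ t₀ and y → y₀. For K ∈ ℕ set τ_k = kτ/K. Then the Riemann-type sums Σ_{k=0}^{K−1} h(τ_k, f(τ_k)) · λ(τ_k) · (τ/K) converge, as K → ∞, to the Lebesgue integral ∫₀^τ h(t, f⁻(t)) λ(t) dt. -/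
/-!
Left-endpoint Riemann sums of a function `φ` are integrals of the step function
`t ↦ φ (leftGridPoint τ K t)`. For `t > 0` the grid point `leftGridPoint τ K t` tends to `t`
strictly from the left, so this step function converges pointwise on `(0, τ]` to the left limit
of `φ`, and dominated convergence gives the limit of the sums. In the theorem,
`φ t = h t (f t) * λ t`, whose left limit at `t` is `h t (f⁻ t) * λ t`.
-/

open Set Filter MeasureTheory Topology

noncomputable section

/-- Left end point of the cell `(kτ/K, (k+1)τ/K]` of the uniform grid that contains `t`. -/
def leftGridPoint (τ : ℝ) (K : ℕ) (t : ℝ) : ℝ :=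
  ((⌈t * K / τ⌉ : ℝ) - 1) * τ / K

variable {τ : ℝ} {K : ℕ}

theorem leftGridPoint_eq_of_mem_Ioc (hτ : 0 < τ) (hK : 0 < K) {k : ℕ} {t : ℝ}
    (ht : t ∈ Ioc ((k : ℝ) * τ / K) ((k + 1) * τ / K)) :
    leftGridPoint τ K t = k * τ / K := by
  have hK' : (0 : ℝ) < K := by exact_mod_cast hK
  have hceil : ⌈t * K / τ⌉ = (k : ℤ) + 1 := by
    rw [Int.ceil_eq_iff, lt_div_iff₀ hτ, div_le_iff₀ hτ]
    rw [mem_Ioc, div_lt_iff₀ hK', le_div_iff₀ hK'] at ht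
    push_cast
    constructor <;> linarith [ht.1, ht.2]
  simp [leftGridPoint, hceil]

theorem leftGridPoint_eq_ceil_sub_one_mul (t : ℝ) :
    leftGridPoint τ K t = (⌈t * K / τ⌉ - 1) * (τ / K) :=
  mul_div_assoc _ _ _

theorem leftGridPoint_lt (hτ : 0 < τ) (hK : 0 < K) (t : ℝ) : leftGridPoint τ K t < t := by
  calc leftGridPoint τ K t = (⌈t * K / τ⌉ - 1) * (τ / K) := leftGridPoint_eq_ceil_sub_one_mul t
    _ < t * K / τ * (τ / K) := by gcongr; linarith [Int.ceil_lt_add_one (t * K / τ)]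
    _ = t := by field_simp

theorem sub_div_le_leftGridPoint (hτ : 0 < τ) (hK : 0 < K) (t : ℝ) :
    t - τ / K ≤ leftGridPoint τ K t := by
  calc t - τ / K = (t * K / τ - 1) * (τ / K) := by field_simp
    _ ≤ (⌈t * K / τ⌉ - 1) * (τ / K) := by gcongr; exact Int.le_ceil _
    _ = leftGridPoint τ K t := (leftGridPoint_eq_ceil_sub_one_mul t).symm

theorem leftGridPoint_nonneg (hτ : 0 < τ) {t : ℝ} (ht : 0 < t) : 0 ≤ leftGridPoint τ K t := by
  rcases K.eq_zero_or_pos with rfl | hK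
  · simp [leftGridPoint]
  have h : (1 : ℝ) ≤ ⌈t * K / τ⌉ := by exact_mod_cast Int.one_le_ceil_iff.mpr (by positivity)
  rw [leftGridPoint_eq_ceil_sub_one_mul]
  exact mul_nonneg (by linarith) (by positivity)

theorem tendsto_leftGridPoint_nhdsLT (hτ : 0 < τ) (t : ℝ) :
    Tendsto (fun K => leftGridPoint τ K t) atTop (𝓝[<] t) := by
  have hlower : Tendsto (fun K : ℕ => t - τ / K) atTop (𝓝 t) := by
    simpa using tendsto_const_nhds.sub (tendsto_const_div_atTop_nhds_zero_nat τ)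
  refine tendsto_nhdsWithin_iff.mpr ⟨?_, ?_⟩
  · refine tendsto_of_tendsto_of_tendsto_of_le_of_le' hlower tendsto_const_nhds ?_ ?_
    · filter_upwards [eventually_gt_atTop 0] with K hK using sub_div_le_leftGridPoint hτ hK t
    · filter_upwards [eventually_gt_atTop 0] with K hK using (leftGridPoint_lt hτ hK t).le
  · filter_upwards [eventually_gt_atTop 0] with K hK using leftGridPoint_lt hτ hK t

theorem measurable_comp_leftGridPoint {β : Type*} [MeasurableSpace β] (φ : ℝ → β) :
    Measurable fun t => φ (leftGridPoint τ K t) :=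
  (measurable_of_countable fun n : ℤ => φ (((n : ℝ) - 1) * τ / K)).comp
    ((measurable_id.mul_const _).div_const _).ceil

theorem sum_mul_eq_integral_comp_leftGridPoint (hτ : 0 < τ) (hK : 0 < K)
    (φ : ℝ → ℝ) :
    ∑ k ∈ Finset.range K, φ (k * τ / K) * (τ / K) = ∫ t in (0 : ℝ)..τ, φ (leftGridPoint τ K t) := by
  set a : ℕ → ℝ := fun k => k * τ / K
  have ha : ∀ k, a k ≤ a (k + 1) := fun k => by simp only [a]; gcongr; simp
  have hconst : ∀ k, EqOn (fun _ => φ (a k)) (fun t => φ (leftGridPoint τ K t))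
      (uIoc (a k) (a (k + 1))) := fun k t ht => by
    rw [uIoc_of_le (ha k)] at ht
    simp only [leftGridPoint_eq_of_mem_Ioc hτ hK (by exact_mod_cast ht), a]
  have hsum := intervalIntegral.sum_integral_adjacent_intervals (μ := volume) (n := K)
    fun k _ => intervalIntegrable_const.congr (hconst k)
  rw [show a 0 = 0 by simp [a], show a K = τ by simp only [a]; field_simp] at hsum
  rw [← hsum]
  refine Finset.sum_congr rfl fun k _ => ?_
  rw [intervalIntegral.integral_congr_ae (g := fun _ => φ (a k))
      (.of_forall fun t ht => (hconst k ht).symm), intervalIntegral.integral_const, smul_eq_mul,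
    mul_comm]
  simp only [a]
  push_cast
  ring

theorem tendsto_sum_mul_of_tendsto_nhdsLT {C : ℝ} {φ ψ : ℝ → ℝ} (hτ : 0 < τ)
    (hφ_bdd : ∀ t ∈ Ico 0 τ, |φ t| ≤ C) (hφψ : ∀ t ∈ Ioc 0 τ, Tendsto φ (𝓝[<] t) (𝓝 (ψ t))) :
    Tendsto (fun K : ℕ => ∑ k ∈ Finset.range K, φ (k * τ / K) * (τ / K)) atTop
      (𝓝 (∫ t in (0 : ℝ)..τ, ψ t)) := by
  have hIoc : uIoc 0 τ = Ioc 0 τ := uIoc_of_le hτ.le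
  have hsum : (fun K : ℕ => ∫ t in (0 : ℝ)..τ, φ (leftGridPoint τ K t)) =ᶠ[atTop]
      fun K : ℕ => ∑ k ∈ Finset.range K, φ (k * τ / K) * (τ / K) := by
    filter_upwards [eventually_gt_atTop 0] with K hK
    exact (sum_mul_eq_integral_comp_leftGridPoint hτ hK φ).symm
  refine (intervalIntegral.tendsto_integral_filter_of_dominated_convergence (fun _ => C)
    (.of_forall fun K => (measurable_comp_leftGridPoint φ).aestronglyMeasurable) ?_
    intervalIntegrable_const (.of_forall fun t ht => ?_)).congr' hsum
  · filter_upwards [eventually_gt_atTop 0] with K hK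
    refine .of_forall fun t ht => ?_
    rw [hIoc] at ht
    exact hφ_bdd _ ⟨leftGridPoint_nonneg hτ ht.1, (leftGridPoint_lt hτ hK t).trans_le ht.2⟩
  · rw [hIoc] at ht
    exact (hφψ t ht).comp (tendsto_leftGridPoint_nhdsLT hτ t)

theorem stmt13_general (τ : ℝ) (hτ : 0 < τ) (f fl : ℝ → ℝ)
    (hfl : ∀ t ∈ Ioc (0 : ℝ) τ, Tendsto f (nhdsWithin t (Iio t)) (nhds (fl t)))
    (lam : ℝ → ℝ) (c : ℝ) (hlam_bdd : ∀ t ∈ Icc (0 : ℝ) τ, |lam t| ≤ c)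
    (hlam_lc : ∀ t ∈ Ioc (0 : ℝ) τ, ContinuousWithinAt lam (Iio t) t)
    (h : ℝ → ℝ → ℝ) (b : ℝ) (hh_bdd : ∀ t y : ℝ, |h t y| ≤ b)
    (hh : ∀ t₀ ∈ Ioc (0 : ℝ) τ, ∀ y₀ : ℝ,
      Tendsto (fun p : ℝ × ℝ => h p.1 p.2)
        (nhdsWithin (t₀, y₀) (Iio t₀ ×ˢ (univ : Set ℝ))) (nhds (h t₀ y₀))) :
    Tendsto
      (fun K : ℕ => ∑ k ∈ Finset.range K,
        h ((k : ℝ) * τ / K) (f ((k : ℝ) * τ / K)) * lam ((k : ℝ) * τ / K) * (τ / K))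
      atTop (nhds (∫ t in (0 : ℝ)..τ, h t (fl t) * lam t)) := by
  have hb : 0 ≤ b := (abs_nonneg _).trans (hh_bdd 0 0)
  refine tendsto_sum_mul_of_tendsto_nhdsLT (φ := fun s => h s (f s) * lam s) (C := b * c) hτ
    (fun t ht => ?_) (fun t ht => ?_)
  · rw [abs_mul]
    exact mul_le_mul (hh_bdd _ _) (hlam_bdd t (Ico_subset_Icc_self ht)) (abs_nonneg _) hb
  · have hgraph : Tendsto (fun s => (s, f s)) (𝓝[<] t) (𝓝[Iio t ×ˢ univ] (t, fl t)) := by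
      rw [nhdsWithin_prod_eq, nhdsWithin_univ]
      exact tendsto_id.prodMk (hfl t ht)
    exact ((hh t ht (fl t)).comp hgraph).mul (hlam_lc t ht)

/-- Convergence of Riemann-type sums on the grid `τ_k = kτ/K` to the Lebesgue integral:
for `f : [0,τ] → ℝ` cadlag with left-limit function `fl` (and `fl 0 = f 0`), `λ` bounded and
left-continuous on `(0, τ]`, and `h` bounded and satisfying `h(t, y) → h(t₀, y₀)` whenever
`t ↑ t₀` and `y → y₀`, the sums `Σ_{k<K} h(τ_k, f(τ_k)) λ(τ_k) (τ/K)` converge as `K → ∞`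
to `∫₀^τ h(t, f⁻(t)) λ(t) dt`. -/
theorem stmt13 (τ : ℝ) (hτ : 0 < τ) (f fl : ℝ → ℝ)
    (hf_right : ∀ t ∈ Ico (0 : ℝ) τ, ContinuousWithinAt f (Ici t) t)
    (hfl : ∀ t ∈ Ioc (0 : ℝ) τ, Tendsto f (nhdsWithin t (Iio t)) (nhds (fl t)))
    (hfl0 : fl 0 = f 0)
    (lam : ℝ → ℝ) (c : ℝ) (hlam_bdd : ∀ t ∈ Icc (0 : ℝ) τ, |lam t| ≤ c)
    (hlam_lc : ∀ t ∈ Ioc (0 : ℝ) τ, ContinuousWithinAt lam (Iio t) t)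
    (h : ℝ → ℝ → ℝ) (b : ℝ) (hh_bdd : ∀ t y : ℝ, |h t y| ≤ b)
    (hh : ∀ t₀ ∈ Ioc (0 : ℝ) τ, ∀ y₀ : ℝ,
      Tendsto (fun p : ℝ × ℝ => h p.1 p.2)
        (nhdsWithin (t₀, y₀) (Iio t₀ ×ˢ (univ : Set ℝ))) (nhds (h t₀ y₀))) :
    Tendsto
      (fun K : ℕ => ∑ k ∈ Finset.range K,
        h ((k : ℝ) * τ / K) (f ((k : ℝ) * τ / K)) * lam ((k : ℝ) * τ / K) * (τ / K))
      atTop (nhds (∫ t in (0 : ℝ)..τ, h t (fl t) * lam t)) :=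
  stmt13_general τ hτ f fl hfl lam c hlam_bdd hlam_lc h b hh_bdd hh

end
end
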